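/- Let (L,[·,·], R, d) be a Reynolds LieDer pair over a field k and (V; ρ, R_V, d_V) a representation of it. Let Θ : Λ²L → V be alternating bilinear and ξ, χ : L → V linear. On L ⊕ V define [a+u, b+v]_Θ := [a,b] + Θ(a,b) + ρ(a)v − ρ(b)u, R_ξ(a+u) := R(a) + R_V(u) + ξ(a), and d_χ(a+u) := d(a) + d_V(u) + χ(a). Then (L ⊕ V, [·,·]_Θ, R_ξ, d_χ) is a Reynolds LieDer pair if and only if for all a, b, c ∈ L: (1) −ρ(a)Θ(b,c) + ρ(b)Θ(a,c) − ρ(c)Θ(a,b) + Θ([a,b],c) − Θ([a,c],b) + Θ([b,c],a) = 0; (2) Θ(Ra,Rb) − R_V(Θ(Ra,b) + Θ(a,Rb)) + R_V Θ(Ra,Rb) + ρ(Ra)ξ(b) − ρ(Rb)ξ(a) + R_V(ρ(Ra)ξ(b) − ρ(Rb)ξ(a)) − R_V(ρ(a)ξ(b) − ρ(b)ξ(a)) − ξ([a,Rb] + [Ra,b] − [Ra,Rb]) = 0; (3) d_V Θ(a,b) + χ([a,b]) − Θ(da,b) + ρ(b)χ(a) − Θ(a,db) − ρ(a)χ(b)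 = 0; (4) ξ(da) + R_V(χ(a)) − χ(Ra) − d_V(ξ(a)) = 0. -/
import Mathlib


namespace ReynoldsAbelianExtension

variable {k L V : Type*} [Field k] [LieRing L] [LieAlgebra k L]
  [AddCommGroup V] [Module k V]

/-- The bracket `[a+u, b+v]_Θ := [a,b] + Θ(a,b) + ρ(a)v - ρ(b)u` on `L × V`. -/
def extBracket (ρ : L →ₗ[k] Module.End k V) (Θ : L →ₗ[k] L →ₗ[k] V)
    (p q : L × V) : L × V :=
  (⁅p.1, q.1⁆, Θ p.1 q.1 + ρ p.1 q.2 - ρ q.1 p.2)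

/-- The map `R_ξ(a+u) := R(a) + R_V(u) + ξ(a)` on `L × V`. -/
def extR (R : L →ₗ[k] L) (RV : V →ₗ[k] V) (ξ : L →ₗ[k] V) (p : L × V) : L × V :=
  (R p.1, RV p.2 + ξ p.1)

/-- The map `d_χ(a+u) := d(a) + d_V(u) + χ(a)` on `L × V`. -/
def extD (d : L →ₗ[k] L) (dV : V →ₗ[k] V) (χ : L →ₗ[k] V) (p : L × V) : L × V :=
  (d p.1, dV p.2 + χ p.1)

/-- `(L ⊕ V, [·,·]_Θ, R_ξ, d_χ)` is a Reynolds LieDer pair if and only if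
`(Θ, ξ, χ)` is a 2-cocycle of the Reynolds LieDer pair `(L, R, d)` with coefficients
in the representation `(V; ρ, R_V, d_V)`. -/
theorem extension_lieDer_iff_two_cocycle
    (R : L →ₗ[k] L)
    (hR : ∀ x y : L, ⁅R x, R y⁆ = R (⁅R x, y⁆ + ⁅x, R y⁆ - ⁅R x, R y⁆))
    (d : L →ₗ[k] L) (hd : ∀ x y : L, d ⁅x, y⁆ = ⁅d x, y⁆ + ⁅x, d y⁆)
    (hRd : ∀ x : L, R (d x) = d (R x))
    (ρ : L →ₗ[k] Module.End k V)
    (hρ : ∀ (x y : L) (v : V), ρ ⁅x, y⁆ v = ρ x (ρ y v) - ρ y (ρ x v))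
    (RV : V →ₗ[k] V)
    (hRV : ∀ (x : L) (u : V),
      ρ (R x) (RV u) = RV (ρ (R x) u + ρ x (RV u) - ρ (R x) (RV u)))
    (dV : V →ₗ[k] V)
    (hdV : ∀ (x : L) (u : V), dV (ρ x u) = ρ (d x) u + ρ x (dV u))
    (hRVdV : ∀ u : V, RV (dV u) = dV (RV u))
    (Θ : L →ₗ[k] L →ₗ[k] V) (hΘ : ∀ a : L, Θ a a = 0)
    (ξ : L →ₗ[k] V) (χ : L →ₗ[k] V) :
    ((∀ p : L × V, extBracket ρ Θ p p = 0) ∧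
     (∀ p q r : L × V,
       extBracket ρ Θ (extBracket ρ Θ p q) r
         + extBracket ρ Θ (extBracket ρ Θ q r) p
         + extBracket ρ Θ (extBracket ρ Θ r p) q = 0) ∧
     (∀ p q : L × V,
       extBracket ρ Θ (extR R RV ξ p) (extR R RV ξ q)
         = extR R RV ξ (extBracket ρ Θ (extR R RV ξ p) q
             + extBracket ρ Θ p (extR R RV ξ q)
             - extBracket ρ Θ (extR R RV ξ p) (extR R RV ξ q))) ∧
     (∀ p q : L × V,
       extD d dV χ (extBracket ρ Θ p q)
         = extBracket ρ Θ (extD d dV χ p) q + extBracket ρ Θ p (extD d dV χ q)) ∧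
     (∀ p : L × V, extR R RV ξ (extD d dV χ p) = extD d dV χ (extR R RV ξ p)))
    ↔
    ((∀ a b c : L,
       -(ρ a (Θ b c)) + ρ b (Θ a c) - ρ c (Θ a b)
         + Θ ⁅a, b⁆ c - Θ ⁅a, c⁆ b + Θ ⁅b, c⁆ a = 0) ∧
     (∀ a b : L,
       Θ (R a) (R b) - RV (Θ (R a) b + Θ a (R b)) + RV (Θ (R a) (R b))
         + ρ (R a) (ξ b) - ρ (R b) (ξ a)
         + RV (ρ (R a) (ξ b) - ρ (R b) (ξ a))
         - RV (ρ a (ξ b) - ρ b (ξ a))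
         - ξ (⁅a, R b⁆ + ⁅R a, b⁆ - ⁅R a, R b⁆) = 0) ∧
     (∀ a b : L,
       dV (Θ a b) + χ ⁅a, b⁆ - Θ (d a) b + ρ b (χ a) - Θ a (d b) - ρ a (χ b) = 0) ∧
     (∀ a : L, ξ (d a) + RV (χ a) - χ (R a) - dV (ξ a) = 0)) := by

  have e : ∀ x y : L, ⁅x, y⁆ = -⁅y, x⁆ := fun x y => (lie_skew x y).symm
  have hskew : ∀ x y : L, Θ x y = -Θ y x := by
    intro x y
    have h := hΘ (x + y)
    simp only [map_add, LinearMap.add_apply, hΘ x, hΘ y] at h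
    linear_combination (norm := abel) h
  constructor
  · rintro ⟨-, hJ, hRe, hDe, hC⟩
    refine ⟨?_, ?_, ?_, ?_⟩
    · intro a b c
      have h := congrArg Prod.snd (hJ (a,0) (b,0) (c,0))
      simp only [extBracket, Prod.snd_add, Prod.snd_zero, map_zero, add_zero, zero_add,
        sub_zero, zero_sub, Prod.fst_add, Prod.fst_zero] at h
      rw [e c a, hskew c a] at h
      simp only [map_neg, LinearMap.neg_apply] at h
      linear_combination (norm := abel) h
    · intro a b
      have h := congrArg Prod.snd (hRe (a,0) (b,0))
      simp only [extBracket, extR, Prod.snd_add, Prod.snd_sub, Prod.snd_zero,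
        Prod.fst_add, Prod.fst_sub, Prod.fst_zero, map_zero, add_zero, zero_add,
        sub_zero, zero_sub, map_add, map_sub, map_neg] at h ⊢
      linear_combination (norm := abel) h
    · intro a b
      have h := congrArg Prod.snd (hDe (a,0) (b,0))
      simp only [extBracket, extD, Prod.snd_add, Prod.snd_zero, Prod.fst_add,
        Prod.fst_zero, map_zero, add_zero, zero_add, sub_zero, zero_sub,
        map_add, map_sub, map_neg] at h ⊢
      linear_combination (norm := abel) h
    · intro a
      have h := congrArg Prod.snd (hC (a,0))
      simp only [extR, extD, map_zero, add_zero, zero_add] at h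
      linear_combination (norm := abel) h
  · rintro ⟨h1, h2, h3, h4⟩
    refine ⟨?_, ?_, ?_, ?_, ?_⟩
    · intro p
      simp [extBracket, hΘ, Prod.ext_iff]
    · intro p q r
      rw [Prod.ext_iff]
      constructor
      · simp only [extBracket, Prod.fst_add, Prod.fst_zero]
        rw [e ⁅p.1,q.1⁆ r.1, e ⁅q.1,r.1⁆ p.1, e ⁅r.1,p.1⁆ q.1]
        linear_combination (norm := abel) -lie_jacobi p.1 q.1 r.1
      · have h := h1 p.1 q.1 r.1
        rw [e p.1 r.1, hskew p.1 r.1] at h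
        simp only [map_neg, LinearMap.neg_apply] at h
        simp only [extBracket, Prod.snd_add, Prod.snd_zero, hρ, map_add, map_sub]
        linear_combination (norm := abel) h
    · intro p q
      rw [Prod.ext_iff]
      constructor
      · simp only [extBracket, extR, Prod.fst_add, Prod.fst_sub]
        exact hR p.1 q.1
      · have hRV' : ∀ (x : L) (u : V), ρ (R x) (RV u)
            = RV (ρ (R x) u) + RV (ρ x (RV u)) - RV (ρ (R x) (RV u)) := by
          intro x u
          conv_lhs => rw [hRV x u]
          rw [map_sub, map_add]
        have h := h2 p.1 q.1
        simp only [map_add, map_sub] at h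
        simp only [extBracket, extR, Prod.snd_add, Prod.snd_sub, Prod.fst_add,
          Prod.fst_sub, map_add, map_sub]
        linear_combination (norm := abel) h + hRV' p.1 q.2 - hRV' q.1 p.2
    · intro p q
      rw [Prod.ext_iff]
      constructor
      · simp only [extBracket, extD, Prod.fst_add]
        exact hd p.1 q.1
      · have h := h3 p.1 q.1
        simp only [extBracket, extD, Prod.snd_add, map_add, map_sub, hdV]
        linear_combination (norm := abel) h
    · intro p
      rw [Prod.ext_iff]
      constructor
      · exact hRd p.1
      · have h := h4 p.1
        simp only [extR, extD, map_add, hRVdV]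
        linear_combination (norm := abel) h


end ReynoldsAbelianExtension
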